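/- arXiv:math/0606029 — 2 statements merged into one kernel-verified Lean document; each statement's English description precedes it below -/
import Mathlib

section
/- Suppose A: R^m → R^m is a linear map admitting an invariant splitting R^m = E^s ⊕ E^c with ‖A x‖ ≤ λ‖x‖ for x ∈ E^s and ‖A x‖ ≥ σ‖x‖ for x ∈ E^c, where 0<λ<σ, using the adapted max-norm ‖(x_s,x_c)‖ = max(‖x_s‖,‖x_c‖). Let ε>0 satisfy λ+ε<σ−ε and let θ = (λ+ε)/(σ−ε). If G(x) = A x + ρ(x) with ‖ρ(x)‖ ≤ ε‖x‖ for all x in a ball B(0,r̃), then the central cone V_c = {(x_s,x_c) : ‖x_s‖ ≤ θ‖x_c‖} is forward invariant on B(0,r̃): if x ∈ B(0,r̃) ∩ V_c and G(x) ∈ B(0,r̃), then G(x) ∈ V_c; moreover ‖(G(x))_c‖ ≥ (σ−ε)‖x_c‖. -/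
open Metric Set

/-! The splitting commutes with `A`, so each component of `G x` is `A` applied to that component
of `x`, plus the same component of `ρ x`, which the max-norm bounds by `‖ρ x‖`. Inside the cone the
central component carries the norm, `‖x‖ = ‖x_c‖`, whence `‖(G x)_s‖ ≤ (λ + ε) ‖x_c‖` and
`‖(G x)_c‖ ≥ (σ - ε) ‖x_c‖`; the quotient of the two is the width `θ` of the cone. -/

namespace Submodule

theorem projection_apply_of_mem_invtSubmodule {R M : Type*} [Ring R] [AddCommGroup M] [Module R M]
    {p q : Submodule R M} (hpq : IsCompl p q) {T : M →ₗ[R] M}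
    (hp : p ∈ Module.End.invtSubmodule T) (hq : q ∈ Module.End.invtSubmodule T) (x : M) :
    p.projection q hpq (T x) = T (p.projection q hpq x) := by
  have hcomm : Commute (p.projection q hpq) T :=
    (LinearMap.IsIdempotentElem.commute_iff (isIdempotentElem_projection hpq)).2
      ⟨by simpa using hp, by simpa using hq⟩
  exact LinearMap.congr_fun hcomm.eq x

variable {R M : Type*} [Ring R] [SeminormedAddCommGroup M] [Module R M]
  {p q : Submodule R M} (hpq : IsCompl p q) {T : M →ₗ[R] M}

theorem norm_projection_map_add_le (hp : p ∈ Module.End.invtSubmodule T)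
    (hq : q ∈ Module.End.invtSubmodule T) (hproj : ∀ y, ‖p.projection q hpq y‖ ≤ ‖y‖) {c : ℝ}
    (hT : ∀ x ∈ p, ‖T x‖ ≤ c * ‖x‖) (x y : M) :
    ‖p.projection q hpq (T x + y)‖ ≤ c * ‖p.projection q hpq x‖ + ‖y‖ := by
  rw [map_add, projection_apply_of_mem_invtSubmodule hpq hp hq]
  exact (norm_add_le _ _).trans (add_le_add (hT _ (projection_apply_mem hpq x)) (hproj y))

theorem le_norm_projection_map_add (hp : p ∈ Module.End.invtSubmodule T)
    (hq : q ∈ Module.End.invtSubmodule T) (hproj : ∀ y, ‖p.projection q hpq y‖ ≤ ‖y‖) {c : ℝ}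
    (hT : ∀ x ∈ p, c * ‖x‖ ≤ ‖T x‖) (x y : M) :
    c * ‖p.projection q hpq x‖ - ‖y‖ ≤ ‖p.projection q hpq (T x + y)‖ := by
  rw [map_add, projection_apply_of_mem_invtSubmodule hpq hp hq]
  have := norm_sub_norm_le (T (p.projection q hpq x)) (-p.projection q hpq y)
  rw [norm_neg, sub_neg_eq_add] at this
  linarith [hT _ (projection_apply_mem hpq x), hproj y]

end Submodule

theorem stmt1_general {E : Type*} [NormedAddCommGroup E] [NormedSpace ℝ E]
    (A : E →L[ℝ] E) (Es Ec : Submodule ℝ E) (hcompl : IsCompl Es Ec)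
    (hAs : ∀ x ∈ Es, A x ∈ Es) (hAc : ∀ x ∈ Ec, A x ∈ Ec)
    (lam sig eps r : ℝ) (hlam0 : 0 < lam) (heps : 0 < eps)
    (hgap : lam + eps < sig - eps)
    (hnorm : ∀ x : E,
      ‖x‖ = max ‖(Es.linearProjOfIsCompl Ec hcompl x : E)‖
              ‖(Ec.linearProjOfIsCompl Es hcompl.symm x : E)‖)
    (hAlam : ∀ x ∈ Es, ‖A x‖ ≤ lam * ‖x‖)
    (hAsig : ∀ x ∈ Ec, sig * ‖x‖ ≤ ‖A x‖)
    (G ρ : E → E) (hG : ∀ x, G x = A x + ρ x)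
    (hρ : ∀ x ∈ ball (0 : E) r, ‖ρ x‖ ≤ eps * ‖x‖)
    (x : E) (hx : x ∈ ball (0 : E) r)
    (hxcone : ‖(Es.linearProjOfIsCompl Ec hcompl x : E)‖ ≤
      ((lam + eps) / (sig - eps)) * ‖(Ec.linearProjOfIsCompl Es hcompl.symm x : E)‖) :
    ‖(Es.linearProjOfIsCompl Ec hcompl (G x) : E)‖ ≤
      ((lam + eps) / (sig - eps)) * ‖(Ec.linearProjOfIsCompl Es hcompl.symm (G x) : E)‖
    ∧ (sig - eps) * ‖(Ec.linearProjOfIsCompl Es hcompl.symm x : E)‖ ≤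
        ‖(Ec.linearProjOfIsCompl Es hcompl.symm (G x) : E)‖ := by
  -- `linearProjOfIsCompl` is a deprecated alias of `projectionOnto`, whose coercion is `projection`.
  set P := Es.projection Ec hcompl
  set Q := Ec.projection Es hcompl.symm
  set θ := (lam + eps) / (sig - eps)
  have hnorm : ∀ y, ‖y‖ = max ‖P y‖ ‖Q y‖ := hnorm
  have hxcone : ‖P x‖ ≤ θ * ‖Q x‖ := hxcone
  show ‖P (G x)‖ ≤ θ * ‖Q (G x)‖ ∧ (sig - eps) * ‖Q x‖ ≤ ‖Q (G x)‖
  have hsig_eps : 0 < sig - eps := by linarith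
  have hθ_nonneg : 0 ≤ θ := by positivity
  have hθ_le_one : θ ≤ 1 := (div_le_one hsig_eps).2 (by linarith)
  have hPQ : ‖P x‖ ≤ ‖Q x‖ := hxcone.trans (mul_le_of_le_one_left (norm_nonneg _) hθ_le_one)
  have hρx : ‖ρ x‖ ≤ eps * ‖Q x‖ := (hnorm x ▸ max_eq_right hPQ) ▸ hρ x hx
  have hstable : ‖P (G x)‖ ≤ lam * ‖P x‖ + ‖ρ x‖ := hG x ▸
    Es.norm_projection_map_add_le hcompl hAs hAc
      (fun y ↦ (hnorm y).ge.trans' (le_max_left _ _)) hAlam x (ρ x)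
  have hcentral : sig * ‖Q x‖ - ‖ρ x‖ ≤ ‖Q (G x)‖ := hG x ▸
    Ec.le_norm_projection_map_add hcompl.symm hAc hAs
      (fun y ↦ (hnorm y).ge.trans' (le_max_right _ _)) hAsig x (ρ x)
  have hQG : (sig - eps) * ‖Q x‖ ≤ ‖Q (G x)‖ := by linarith
  refine ⟨?_, hQG⟩
  calc ‖P (G x)‖ ≤ (lam + eps) * ‖Q x‖ := by
        linarith [mul_le_mul_of_nonneg_left hPQ hlam0.le]
    _ = θ * ((sig - eps) * ‖Q x‖) := by
        rw [← mul_assoc, div_mul_cancel₀ _ hsig_eps.ne']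
    _ ≤ θ * ‖Q (G x)‖ := mul_le_mul_of_nonneg_left hQG hθ_nonneg

/-- Cone invariance lemma: with an adapted max-norm for the invariant splitting
`E = Es ⊕ Ec`, contraction rate `λ` on `Es`, expansion rate `σ` on `Ec`,
`λ+ε < σ-ε`, and `G = A + ρ` with `‖ρ(x)‖ ≤ ε‖x‖` on the ball, the central cone
of width `θ = (λ+ε)/(σ-ε)` is forward invariant and the central component grows
by a factor at least `σ-ε`. -/
theorem stmt1 {E : Type*} [NormedAddCommGroup E] [NormedSpace ℝ E]
    (A : E →L[ℝ] E) (Es Ec : Submodule ℝ E) (hcompl : IsCompl Es Ec)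
    (hAs : ∀ x ∈ Es, A x ∈ Es) (hAc : ∀ x ∈ Ec, A x ∈ Ec)
    (lam sig eps r : ℝ) (hlam0 : 0 < lam) (hls : lam < sig) (heps : 0 < eps)
    (hgap : lam + eps < sig - eps) (hr : 0 < r)
    (hnorm : ∀ x : E,
      ‖x‖ = max ‖(Es.linearProjOfIsCompl Ec hcompl x : E)‖
              ‖(Ec.linearProjOfIsCompl Es hcompl.symm x : E)‖)
    (hAlam : ∀ x ∈ Es, ‖A x‖ ≤ lam * ‖x‖)
    (hAsig : ∀ x ∈ Ec, sig * ‖x‖ ≤ ‖A x‖)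
    (G ρ : E → E) (hG : ∀ x, G x = A x + ρ x)
    (hρ : ∀ x ∈ ball (0 : E) r, ‖ρ x‖ ≤ eps * ‖x‖)
    (x : E) (hx : x ∈ ball (0 : E) r)
    (hxcone : ‖(Es.linearProjOfIsCompl Ec hcompl x : E)‖ ≤
      ((lam + eps) / (sig - eps)) * ‖(Ec.linearProjOfIsCompl Es hcompl.symm x : E)‖)
    (hGx : G x ∈ ball (0 : E) r) :
    ‖(Es.linearProjOfIsCompl Ec hcompl (G x) : E)‖ ≤
      ((lam + eps) / (sig - eps)) * ‖(Ec.linearProjOfIsCompl Es hcompl.symm (G x) : E)‖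
    ∧ (sig - eps) * ‖(Ec.linearProjOfIsCompl Es hcompl.symm x : E)‖ ≤
        ‖(Ec.linearProjOfIsCompl Es hcompl.symm (G x) : E)‖ :=
  stmt1_general A Es Ec hcompl hAs hAc lam sig eps r hlam0 heps hgap hnorm hAlam hAsig G ρ hG hρ x
    hx hxcone
end

section
/- With the notation of the cone-invariance lemma: if x ∈ B(0,r̃) ∩ V_c with x_c ≠ 0 and all iterates G^n(x) remain in B(0,r̃), then ‖G^n(x)‖ ≥ (σ−ε)^n ‖x_c‖ for all n ∈ ℕ. In particular, if additionally (σ−ε) > 1 or more generally ‖G^n(x)‖ ≤ C·λ^n for some constant C with λ < σ−ε, then x_c = 0. -/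
/-!
In the max-norm adapted to `E = Es ⊕ Ec`, a point of the cone `‖x_s‖ ≤ θ ‖x_c‖` has norm `‖x_c‖`,
so the perturbation `ρ` is controlled by the central component alone. One step of `G = A + ρ`
then multiplies `‖x_c‖` by at least `σ - ε` and, because `λθ + ε ≤ θ(σ - ε)`, keeps the point
in the cone. Iterating gives `‖Gⁿ x‖ ≥ ‖(Gⁿ x)_c‖ ≥ (σ - ε)ⁿ ‖x_c‖`, which is incompatible with
a bound `C λⁿ` unless `x_c = 0`.
-/

open Metric Set

namespace Submodule

variable {R E : Type*} [Ring R] [AddCommGroup E] [Module R E]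

theorem projection_comm_of_invariant {p q : Submodule R E} (hpq : IsCompl p q) {T : E →ₗ[R] E}
    (hTp : ∀ x ∈ p, T x ∈ p) (hTq : ∀ x ∈ q, T x ∈ q) (x : E) :
    p.projection q hpq (T x) = T (p.projection q hpq x) := by
  have hcomm : Commute (p.projection q hpq) T :=
    (LinearMap.IsIdempotentElem.commute_iff (isIdempotentElem_projection hpq)).2
      ⟨by rwa [range_projection, Module.End.mem_invtSubmodule],
       by rwa [ker_projection, Module.End.mem_invtSubmodule]⟩
  exact LinearMap.congr_fun hcomm.eq x

end Submodule

theorem eq_zero_of_pow_mul_le_mul_pow {lam μ a C : ℝ} (hlam : 0 < lam) (hμ : lam < μ)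
    (ha : 0 ≤ a) (hle : ∀ n : ℕ, μ ^ n * a ≤ C * lam ^ n) : a = 0 := by
  by_contra hne
  have hpos : 0 < a := ha.lt_of_ne' hne
  obtain ⟨n, hn⟩ := pow_unbounded_of_one_lt (C / a) ((one_lt_div hlam).2 hμ)
  rw [div_pow, div_lt_div_iff₀ hpos (pow_pos hlam n)] at hn
  linarith [hle n]

section ConeExpansion

variable {E : Type*} [NormedAddCommGroup E] [NormedSpace ℝ E] {Es Ec : Submodule ℝ E}
  {hcompl : IsCompl Es Ec} {A : E →L[ℝ] E} {lam sig eps θ : ℝ}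

local notation "πs" => Es.projection Ec hcompl
local notation "πc" => Ec.projection Es hcompl.symm

theorem norm_eq_norm_projection_of_cone
    (hnorm : ∀ x : E, ‖x‖ = max ‖πs x‖ ‖πc x‖) (hθ1 : θ ≤ 1) {y : E}
    (hy : ‖πs y‖ ≤ θ * ‖πc y‖) : ‖y‖ = ‖πc y‖ := by
  rw [hnorm y]
  exact max_eq_right (hy.trans (by nlinarith [norm_nonneg (πc y)]))

theorem norm_projection_central_step
    (hAs : ∀ x ∈ Es, A x ∈ Es) (hAc : ∀ x ∈ Ec, A x ∈ Ec)
    (hnorm : ∀ x : E, ‖x‖ = max ‖πs x‖ ‖πc x‖) (hAsig : ∀ x ∈ Ec, sig * ‖x‖ ≤ ‖A x‖)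
    (hθ1 : θ ≤ 1) {y ρy : E} (hρy : ‖ρy‖ ≤ eps * ‖y‖) (hy : ‖πs y‖ ≤ θ * ‖πc y‖) :
    (sig - eps) * ‖πc y‖ ≤ ‖πc (A y + ρy)‖ := by
  have hA : πc (A y) = A (πc y) :=
    Submodule.projection_comm_of_invariant hcompl.symm (T := A.toLinearMap) hAc hAs y
  have hρc : ‖πc ρy‖ ≤ eps * ‖πc y‖ := by
    rw [← norm_eq_norm_projection_of_cone hnorm hθ1 hy]
    exact (le_max_right _ _).trans ((hnorm ρy).ge.trans hρy)
  have hAy := hAsig _ (Ec.projection_apply_mem hcompl.symm y)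
  rw [map_add, hA]
  linarith [norm_le_add_norm_add (A (πc y)) (πc ρy)]

theorem cone_invariant_step (hAs : ∀ x ∈ Es, A x ∈ Es) (hAc : ∀ x ∈ Ec, A x ∈ Ec)
    (hnorm : ∀ x : E, ‖x‖ = max ‖πs x‖ ‖πc x‖) (hAlam : ∀ x ∈ Es, ‖A x‖ ≤ lam * ‖x‖)
    (hAsig : ∀ x ∈ Ec, sig * ‖x‖ ≤ ‖A x‖) (hlam : 0 ≤ lam) (hθ0 : 0 ≤ θ) (hθ1 : θ ≤ 1)
    (hθ : lam + eps ≤ θ * (sig - eps)) {y ρy : E} (hρy : ‖ρy‖ ≤ eps * ‖y‖)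
    (hy : ‖πs y‖ ≤ θ * ‖πc y‖) :
    (sig - eps) * ‖πc y‖ ≤ ‖πc (A y + ρy)‖ ∧ ‖πs (A y + ρy)‖ ≤ θ * ‖πc (A y + ρy)‖ := by
  have hc := norm_projection_central_step hAs hAc hnorm hAsig hθ1 hρy hy
  refine ⟨hc, ?_⟩
  have hA : πs (A y) = A (πs y) :=
    Submodule.projection_comm_of_invariant hcompl (T := A.toLinearMap) hAs hAc y
  have hρs : ‖πs ρy‖ ≤ eps * ‖πc y‖ := by
    rw [← norm_eq_norm_projection_of_cone hnorm hθ1 hy]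
    exact (le_max_left _ _).trans ((hnorm ρy).ge.trans hρy)
  have hAy := hAlam _ (Es.projection_apply_mem hcompl y)
  have hnorm_c := norm_nonneg (πc y)
  calc ‖πs (A y + ρy)‖ ≤ ‖A (πs y)‖ + ‖πs ρy‖ := by rw [map_add, hA]; exact norm_add_le _ _
    _ ≤ (lam * θ + eps) * ‖πc y‖ := by nlinarith
    _ ≤ θ * (sig - eps) * ‖πc y‖ := by gcongr; nlinarith
    _ = θ * ((sig - eps) * ‖πc y‖) := mul_assoc _ _ _
    _ ≤ θ * ‖πc (A y + ρy)‖ := mul_le_mul_of_nonneg_left hc hθ0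

theorem iterate_cone_expansion (hAs : ∀ x ∈ Es, A x ∈ Es) (hAc : ∀ x ∈ Ec, A x ∈ Ec)
    (hnorm : ∀ x : E, ‖x‖ = max ‖πs x‖ ‖πc x‖) (hAlam : ∀ x ∈ Es, ‖A x‖ ≤ lam * ‖x‖)
    (hAsig : ∀ x ∈ Ec, sig * ‖x‖ ≤ ‖A x‖) (hlam : 0 ≤ lam) (hθ0 : 0 ≤ θ) (hθ1 : θ ≤ 1)
    (hθ : lam + eps ≤ θ * (sig - eps)) (hμ : 0 ≤ sig - eps) {G ρ : E → E} {S : Set E}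
    (hG : ∀ x, G x = A x + ρ x) (hρ : ∀ x ∈ S, ‖ρ x‖ ≤ eps * ‖x‖) {x : E}
    (hiter : ∀ n : ℕ, G^[n] x ∈ S) (hx : ‖πs x‖ ≤ θ * ‖πc x‖) (n : ℕ) :
    ‖πs (G^[n] x)‖ ≤ θ * ‖πc (G^[n] x)‖ ∧ (sig - eps) ^ n * ‖πc x‖ ≤ ‖πc (G^[n] x)‖ := by
  induction n with
  | zero => exact ⟨hx, by simp⟩
  | succ n ih =>
    obtain ⟨hgrow, hcone⟩ := cone_invariant_step hAs hAc hnorm hAlam hAsig hlam hθ0 hθ1 hθ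
      (hρ _ (hiter n)) ih.1
    rw [Function.iterate_succ_apply', hG]
    refine ⟨hcone, ?_⟩
    calc (sig - eps) ^ (n + 1) * ‖πc x‖ = (sig - eps) * ((sig - eps) ^ n * ‖πc x‖) := by ring
      _ ≤ (sig - eps) * ‖πc (G^[n] x)‖ := mul_le_mul_of_nonneg_left ih.2 hμ
      _ ≤ _ := hgrow

end ConeExpansion

theorem stmt2_general {E : Type*} [NormedAddCommGroup E] [NormedSpace ℝ E]
    (A : E →L[ℝ] E) (Es Ec : Submodule ℝ E) (hcompl : IsCompl Es Ec)
    (hAs : ∀ x ∈ Es, A x ∈ Es) (hAc : ∀ x ∈ Ec, A x ∈ Ec)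
    (lam sig eps r : ℝ) (hlam0 : 0 < lam) (heps : 0 < eps)
    (hgap : lam + eps < sig - eps)
    (hnorm : ∀ x : E,
      ‖x‖ = max ‖(Es.linearProjOfIsCompl Ec hcompl x : E)‖
              ‖(Ec.linearProjOfIsCompl Es hcompl.symm x : E)‖)
    (hAlam : ∀ x ∈ Es, ‖A x‖ ≤ lam * ‖x‖)
    (hAsig : ∀ x ∈ Ec, sig * ‖x‖ ≤ ‖A x‖)
    (G ρ : E → E) (hG : ∀ x, G x = A x + ρ x)
    (hρ : ∀ x ∈ ball (0 : E) r, ‖ρ x‖ ≤ eps * ‖x‖)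
    (x : E)
    (hxcone : ‖(Es.linearProjOfIsCompl Ec hcompl x : E)‖ ≤
      ((lam + eps) / (sig - eps)) * ‖(Ec.linearProjOfIsCompl Es hcompl.symm x : E)‖)
    (hiter : ∀ n : ℕ, G^[n] x ∈ ball (0 : E) r) :
    (∀ n : ℕ,
      (sig - eps) ^ n * ‖(Ec.linearProjOfIsCompl Es hcompl.symm x : E)‖ ≤ ‖G^[n] x‖)
    ∧ ((∃ C : ℝ, ∀ n : ℕ, ‖G^[n] x‖ ≤ C * lam ^ n) →
        (Ec.linearProjOfIsCompl Es hcompl.symm x : E) = 0) := by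
  have hμ : 0 < sig - eps := by linarith
  have hθ : lam + eps = (lam + eps) / (sig - eps) * (sig - eps) := (div_mul_cancel₀ _ hμ.ne').symm
  have hcentral (n : ℕ) := (iterate_cone_expansion hAs hAc hnorm hAlam hAsig hlam0.le
    (div_nonneg (by linarith) hμ.le) ((div_le_one hμ).2 hgap.le) hθ.le hμ.le hG hρ hiter
    hxcone n).2
  have hgrowth (n : ℕ) : (sig - eps) ^ n * ‖Ec.projection Es hcompl.symm x‖ ≤ ‖G^[n] x‖ :=
    (hcentral n).trans ((le_max_right _ _).trans (hnorm _).ge)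
  refine ⟨hgrowth, fun ⟨C, hC⟩ => norm_eq_zero.1 ?_⟩
  exact eq_zero_of_pow_mul_le_mul_pow hlam0 (by linarith) (norm_nonneg _)
    fun n => (hgrowth n).trans (hC n)

/-- Iterated cone expansion: in the setting of the cone-invariance lemma, if `x`
lies in the central cone with nonzero central component and all iterates of `G`
stay in the ball, then `‖Gⁿ x‖ ≥ (σ-ε)ⁿ ‖x_c‖`; consequently if `‖Gⁿ x‖ ≤ C λⁿ`
for some constant `C`, then `x_c = 0`. -/
theorem stmt2 {E : Type*} [NormedAddCommGroup E] [NormedSpace ℝ E]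
    (A : E →L[ℝ] E) (Es Ec : Submodule ℝ E) (hcompl : IsCompl Es Ec)
    (hAs : ∀ x ∈ Es, A x ∈ Es) (hAc : ∀ x ∈ Ec, A x ∈ Ec)
    (lam sig eps r : ℝ) (hlam0 : 0 < lam) (hls : lam < sig) (heps : 0 < eps)
    (hgap : lam + eps < sig - eps) (hr : 0 < r)
    (hnorm : ∀ x : E,
      ‖x‖ = max ‖(Es.linearProjOfIsCompl Ec hcompl x : E)‖
              ‖(Ec.linearProjOfIsCompl Es hcompl.symm x : E)‖)
    (hAlam : ∀ x ∈ Es, ‖A x‖ ≤ lam * ‖x‖)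
    (hAsig : ∀ x ∈ Ec, sig * ‖x‖ ≤ ‖A x‖)
    (G ρ : E → E) (hG : ∀ x, G x = A x + ρ x)
    (hρ : ∀ x ∈ ball (0 : E) r, ‖ρ x‖ ≤ eps * ‖x‖)
    (x : E)
    (hxcone : ‖(Es.linearProjOfIsCompl Ec hcompl x : E)‖ ≤
      ((lam + eps) / (sig - eps)) * ‖(Ec.linearProjOfIsCompl Es hcompl.symm x : E)‖)
    (hxc : (Ec.linearProjOfIsCompl Es hcompl.symm x : E) ≠ 0)
    (hiter : ∀ n : ℕ, G^[n] x ∈ ball (0 : E) r) :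
    (∀ n : ℕ,
      (sig - eps) ^ n * ‖(Ec.linearProjOfIsCompl Es hcompl.symm x : E)‖ ≤ ‖G^[n] x‖)
    ∧ ((∃ C : ℝ, ∀ n : ℕ, ‖G^[n] x‖ ≤ C * lam ^ n) →
        (Ec.linearProjOfIsCompl Es hcompl.symm x : E) = 0) :=
  stmt2_general A Es Ec hcompl hAs hAc lam sig eps r hlam0 heps hgap hnorm hAlam hAsig G ρ hG hρ x
    hxcone hiter
end
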